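/- arXiv:2103.04767 — 3 statements merged into one kernel-verified Lean document; each statement's English description precedes it below -/
import Mathlib

section
/- Let f ∈ ℤ[z] be an irreducible polynomial of degree r ≥ 2 whose complex roots all lie on the closed unit disk, and such that the leading coefficient f_r satisfies |f_r| = 1. Then m(f) = 0, i.e., f is (up to sign) a product of cyclotomic polynomials times a power of z. -/
/-! The hypotheses say exactly that the Mahler measure of `f` is `1`: its leading coefficient is
`±1` and no root contributes a factor `max 1 ‖λ‖ > 1`. The roots are then algebraic integers all
of whose conjugates (which are again roots of `f`) lie in the closed unit disk, so the nonzero ones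
are roots of unity by Kronecker's theorem `NumberField.Embeddings.pow_eq_one_of_norm_le_one`, as
packaged in `Polynomial.pow_eq_one_of_mahlerMeasure_eq_one`. -/

namespace Polynomial

theorem prod_max_one_norm_roots_eq_one {p : ℂ[X]} (h : ∀ a ∈ p.roots, ‖a‖ ≤ 1) :
    (p.roots.map fun a => max 1 ‖a‖).prod = 1 :=
  Multiset.prod_eq_one fun _ hx => by
    obtain ⟨a, ha, rfl⟩ := Multiset.mem_map.1 hx
    exact max_eq_left (h a ha)

theorem mahlerMeasure_eq_one_of_norm_roots_le_one {p : ℂ[X]} (hlc : ‖p.leadingCoeff‖ = 1)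
    (h : ∀ a ∈ p.roots, ‖a‖ ≤ 1) : p.mahlerMeasure = 1 := by
  rw [mahlerMeasure_eq_leadingCoeff_mul_prod_roots, hlc, prod_max_one_norm_roots_eq_one h, one_mul]

theorem norm_leadingCoeff_map_intCast (f : ℤ[X]) :
    ‖(f.map (Int.castRingHom ℂ)).leadingCoeff‖ = (|f.leadingCoeff| : ℝ) := by
  rw [leadingCoeff_map_of_injective (Int.castRingHom ℂ).injective_int, eq_intCast,
    Complex.norm_intCast]

end Polynomial

open Polynomial in
theorem stmt1_general (f : Polynomial ℤ)
    (hroots : ∀ lam ∈ (f.map (Int.castRingHom ℂ)).roots, ‖lam‖ ≤ 1)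
    (hlead : |f.leadingCoeff| = 1) :
    (|f.leadingCoeff| : ℝ) *
      (((f.map (Int.castRingHom ℂ)).roots).map fun lam => max 1 ‖lam‖).prod = 1 ∧
    ∀ lam ∈ (f.map (Int.castRingHom ℂ)).roots, lam ≠ 0 → ∃ n : ℕ, 0 < n ∧ lam ^ n = 1 := by
  have hlc : ‖(f.map (Int.castRingHom ℂ)).leadingCoeff‖ = 1 := by
    rw [norm_leadingCoeff_map_intCast]
    exact_mod_cast hlead
  have hM := mahlerMeasure_eq_one_of_norm_roots_le_one hlc hroots
  refine ⟨?_, fun lam hlam hlam₀ => pow_eq_one_of_mahlerMeasure_eq_one hM hlam₀ ?_⟩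
  · rwa [← norm_leadingCoeff_map_intCast, ← mahlerMeasure_eq_leadingCoeff_mul_prod_roots]
  · rwa [aroots_def, algebraMap_int_eq]

/-- Kronecker's theorem: an irreducible integer polynomial of degree `≥ 2` whose
complex roots all lie in the closed unit disk and whose leading coefficient has
absolute value `1` has logarithmic Mahler measure `0`
(`|f_r| * ∏ max(1,|λ_i|) = 1`), and all its (nonzero) roots are roots of unity. -/
theorem stmt1 (f : Polynomial ℤ) (hirr : Irreducible f) (hdeg : 2 ≤ f.natDegree)
    (hroots : ∀ lam ∈ (f.map (Int.castRingHom ℂ)).roots, ‖lam‖ ≤ 1)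
    (hlead : |f.leadingCoeff| = 1) :
    (|f.leadingCoeff| : ℝ) *
      (((f.map (Int.castRingHom ℂ)).roots).map fun lam => max 1 ‖lam‖).prod = 1 ∧
    ∀ lam ∈ (f.map (Int.castRingHom ℂ)).roots, lam ≠ 0 → ∃ n : ℕ, 0 < n ∧ lam ^ n = 1 :=
  stmt1_general f hroots hlead
end

section
/- Let f ∈ ℤ[z] be a polynomial having a complex root ζ with R := |ζ| > 1. Then there exists M ∈ ℕ such that for all m ≥ M, for every D ≥ 0 and every choice of coefficients ε_0, ..., ε_D ∈ {−2,−1,0,1,2} not all zero, the polynomial P(z) = Σ_{j=0}^D ε_j z^{mj} is not divisible by f in ℚ[z]. -/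
/-!
Evaluating a multiple of `f` at `ζ` shows that `w = ζ ^ m` is a root of the nonzero polynomial
`Σ ε_j X ^ j`, whose coefficients lie in `[-2, 2]` and whose leading coefficient is a nonzero
integer. By the Cauchy bound such roots have norm `< 3`, while `‖ζ ^ m‖ = ‖ζ‖ ^ m ≥ 3` for large `m`.
-/

open Polynomial NNReal

theorem Polynomial.IsRoot.norm_lt_of_norm_coeff_le {K : Type*} [NormedDivisionRing K]
    {p : K[X]} {B : ℝ} (hB : ∀ i, ‖p.coeff i‖ ≤ B) (hlead : 1 ≤ ‖p.leadingCoeff‖) {z : K}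
    (hz : p.IsRoot z) : ‖z‖ < B + 1 := by
  lift B to ℝ≥0 using (norm_nonneg _).trans (hB 0)
  have hp : p ≠ 0 := leadingCoeff_ne_zero.mp (norm_pos_iff.mp (one_pos.trans_le hlead))
  have hsup : (Finset.range p.natDegree).sup (‖p.coeff ·‖₊) ≤ B :=
    Finset.sup_le fun i _ => hB i
  have hbound : cauchyBound p ≤ B + 1 := by
    unfold cauchyBound
    gcongr
    exact (div_le_self zero_le (by exact_mod_cast hlead)).trans hsup
  exact_mod_cast (hz.norm_lt_cauchyBound hp).trans_le hbound

theorem sum_intCast_mul_pow_ne_zero {B : ℤ} {ε : ℕ → ℤ} (hε : ∀ j, |ε j| ≤ B) {D : ℕ}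
    (hne : ∃ j ≤ D, ε j ≠ 0) {w : ℂ} (hw : B + 1 ≤ ‖w‖) :
    ∑ j ∈ Finset.range (D + 1), (ε j : ℂ) * w ^ j ≠ 0 := by
  set Q : ℂ[X] := ∑ j ∈ Finset.range (D + 1), C (ε j : ℂ) * X ^ j
  set η : ℕ → ℤ := fun i => if i ∈ Finset.range (D + 1) then ε i else 0
  have hcoeff (i : ℕ) : Q.coeff i = η i := by
    simp only [Q, η, finsetSum_coeff, coeff_C_mul_X_pow, Finset.sum_ite_eq]
    split_ifs <;> simp
  have hQ : Q ≠ 0 := by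
    obtain ⟨j, hjD, hj⟩ := hne
    refine ne_of_apply_ne (coeff · j) ?_
    simp [hcoeff, η, hjD, hj]
  have hlead : 1 ≤ ‖Q.leadingCoeff‖ := by
    have hη := leadingCoeff_ne_zero.mpr hQ
    rw [leadingCoeff, hcoeff, Int.cast_ne_zero] at hη
    rw [leadingCoeff, hcoeff, Complex.norm_intCast]
    exact_mod_cast Int.one_le_abs hη
  have hB (i : ℕ) : ‖Q.coeff i‖ ≤ B := by
    have hη : |η i| ≤ B := by
      simp only [η]
      split_ifs
      · exact hε i
      · exact abs_zero.trans_le ((abs_nonneg _).trans (hε 0))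
    rw [hcoeff, Complex.norm_intCast]
    exact_mod_cast hη
  intro hsum
  have hroot : Q.IsRoot w := by simpa [Q, eval_finsetSum] using hsum
  exact (hroot.norm_lt_of_norm_coeff_le hB hlead).not_ge hw

/-- If `f ∈ ℤ[z]` has a complex root `ζ` with `|ζ| > 1`, then for all sufficiently
large `m`, no nonzero polynomial `P(z) = Σ_{j=0}^D ε_j z^{mj}` with
`ε_j ∈ {−2,−1,0,1,2}` is divisible by `f` in `ℚ[z]`. -/
theorem stmt4 (f : Polynomial ℤ) (ζ : ℂ)
    (hζ : (f.map (Int.castRingHom ℂ)).IsRoot ζ) (hR : 1 < ‖ζ‖) :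
    ∃ M : ℕ, ∀ m ≥ M, ∀ D : ℕ, ∀ ε : ℕ → ℤ,
      (∀ j, ε j ∈ Set.Icc (-2 : ℤ) 2) → (∃ j ≤ D, ε j ≠ 0) →
      ¬ (f.map (Int.castRingHom ℚ)) ∣
          (∑ j ∈ Finset.range (D + 1), C ((ε j : ℚ)) * X ^ (m * j)) := by
  obtain ⟨M, hM⟩ := pow_unbounded_of_one_lt (3 : ℝ) hR
  refine ⟨M, fun m hm D ε hε hne hdvd => ?_⟩
  have hζm : ((2 : ℤ) : ℝ) + 1 ≤ ‖ζ ^ m‖ := by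
    norm_num [norm_pow]
    exact hM.le.trans (pow_le_pow_right₀ hR.le hm)
  have hf : aeval ζ (f.map (Int.castRingHom ℚ)) = 0 := by
    rwa [← algebraMap_int_eq, aeval_map_algebraMap, aeval_def, eval₂_eq_eval_map]
  have hP := aeval_eq_zero_of_dvd_aeval_eq_zero hdvd hf
  simp only [map_sum, map_mul, aeval_C, map_pow, aeval_X, pow_mul, eq_ratCast,
    Rat.cast_intCast] at hP
  exact sum_intCast_mul_pow_ne_zero (fun j => abs_le.mpr (hε j)) hne hζm hP
end

section
/- Let f ∈ ℤ[z] have a complex root ζ with R := |ζ| > 1. Then there exists M ∈ ℕ such that for all m ≥ M, all 1 ≤ k < m, all D ≥ 0, and all tuples ε, δ ∈ {−1,0,1}^{D+1} not all zero, the polynomial Q(z) = Σ_{j=0}^D ε_j z^{mj} − Σ_{j=0}^D δ_j z^{mj+k} is not divisible by f in ℂ[z]. -/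
/-!
If `f ∣ Q` then `Q(ζ) = 0`, i.e. `A(w) = ζ^k B(w)` with `w = ζ^m`, `A = Σ ε_j X^j`,
`B = Σ δ_j X^j`. Truncate both at the largest index `J` where `ε_J` or `δ_J` is nonzero and
put `S = |w| = R^m`. A polynomial with coefficients of norm `≤ 1` and top coefficient of
norm `≥ 1` is dominated by its top term: `(S - 2) S^J ≤ (S - 1)|A(w)|`, while always
`(S - 1)|A(w)| ≤ S^(J+1)`, and `≤ S^J` if the top coefficient vanishes. Since
`R ≤ R^k ≤ R^(m-1)`, comparing `|A(w)| = R^k |B(w)|` in either case (`δ_J ≠ 0`, or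
`δ_J = 0 ≠ ε_J`) yields `R (S - 2) ≤ S`, which fails once `R^m` is large.
-/

open Polynomial Finset Filter

section NormBounds

variable {𝕜 : Type*} [NormedDivisionRing 𝕜] {w : 𝕜} {c : ℕ → 𝕜}

theorem sub_one_mul_norm_sum_mul_pow_le (hw : 1 ≤ ‖w‖) (hc : ∀ j, ‖c j‖ ≤ 1) (n : ℕ) :
    (‖w‖ - 1) * ‖∑ j ∈ range n, c j * w ^ j‖ ≤ ‖w‖ ^ n := by
  have hsum : ‖∑ j ∈ range n, c j * w ^ j‖ ≤ ∑ j ∈ range n, ‖w‖ ^ j := by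
    refine (norm_sum_le _ _).trans (sum_le_sum fun j _ => ?_)
    rw [norm_mul, norm_pow]
    exact mul_le_of_le_one_left (by positivity) (hc j)
  calc (‖w‖ - 1) * ‖∑ j ∈ range n, c j * w ^ j‖
      ≤ (‖w‖ - 1) * ∑ j ∈ range n, ‖w‖ ^ j := mul_le_mul_of_nonneg_left hsum (by linarith)
    _ = ‖w‖ ^ n - 1 := by rw [mul_comm, geom_sum_mul]
    _ ≤ ‖w‖ ^ n := by linarith

theorem sub_two_mul_pow_le_sub_one_mul_norm_sum_mul_pow (hw : 1 ≤ ‖w‖)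
    (hc : ∀ j, ‖c j‖ ≤ 1) {n : ℕ} (hn : 1 ≤ ‖c n‖) :
    (‖w‖ - 2) * ‖w‖ ^ n ≤ (‖w‖ - 1) * ‖∑ j ∈ range (n + 1), c j * w ^ j‖ := by
  have htop : ‖w‖ ^ n ≤ ‖c n * w ^ n‖ := by
    rw [norm_mul, norm_pow]
    exact le_mul_of_one_le_left (by positivity) hn
  have htri : ‖c n * w ^ n‖ ≤
      ‖∑ j ∈ range (n + 1), c j * w ^ j‖ + ‖∑ j ∈ range n, c j * w ^ j‖ := by
    rw [sum_range_succ]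
    exact norm_le_add_norm_add' _ _
  have hrest := sub_one_mul_norm_sum_mul_pow_le hw hc n
  nlinarith [mul_le_mul_of_nonneg_left (htop.trans htri) (by linarith : 0 ≤ ‖w‖ - 1)]

end NormBounds

theorem eventually_pow_lt_mul_pow_sub_two {R : ℝ} (hR : 1 < R) :
    ∀ᶠ m in atTop, R ^ m < R * (R ^ m - 2) := by
  filter_upwards [(tendsto_pow_atTop_atTop_of_one_lt hR).eventually_gt_atTop (2 * R / (R - 1))]
    with m hm
  rw [div_lt_iff₀ (by linarith)] at hm
  linarith

section Divisibility

variable {𝕜 : Type*} [NormedDivisionRing 𝕜] {ζ : 𝕜} {m k : ℕ}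

theorem sum_mul_pow_ne_mul_sum_mul_pow (hR : 1 < ‖ζ‖) (hk : 1 ≤ k) (hkm : k < m)
    (hm : ‖ζ‖ ^ m < ‖ζ‖ * (‖ζ‖ ^ m - 2)) {ε δ : ℕ → 𝕜} (hε : ∀ j, ‖ε j‖ ≤ 1)
    (hδ : ∀ j, ‖δ j‖ ≤ 1) {J : ℕ} (htop : (1 ≤ ‖ε J‖ ∧ δ J = 0) ∨ 1 ≤ ‖δ J‖) :
    ∑ j ∈ range (J + 1), ε j * (ζ ^ m) ^ j ≠
      ζ ^ k * ∑ j ∈ range (J + 1), δ j * (ζ ^ m) ^ j := by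
  intro h
  have hS : ‖ζ ^ m‖ = ‖ζ‖ ^ m := norm_pow ζ m
  have hw : 1 ≤ ‖ζ ^ m‖ := hS ▸ one_le_pow₀ hR.le
  have hS1 : 0 ≤ ‖ζ‖ ^ m - 1 := by linarith
  have hSJ : 0 < (‖ζ‖ ^ m) ^ J := by positivity
  have hnorm := congrArg norm h
  rw [norm_mul, norm_pow] at hnorm
  refine hm.not_ge ?_
  rcases htop with ⟨hεJ, hδJ⟩ | hδJ
  · have hA := sub_two_mul_pow_le_sub_one_mul_norm_sum_mul_pow hw hε hεJ
    have hB := sub_one_mul_norm_sum_mul_pow_le hw hδ J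
    rw [sum_range_succ (fun j => δ j * (ζ ^ m) ^ j), hδJ, zero_mul, add_zero] at hnorm
    rw [hnorm, hS] at hA
    rw [hS] at hB
    have hk' : ‖ζ‖ ^ k ≤ ‖ζ‖ ^ (m - 1) := pow_le_pow_right₀ hR.le (by omega)
    have hRm : ‖ζ‖ * ‖ζ‖ ^ (m - 1) = ‖ζ‖ ^ m := by rw [← pow_succ']; congr 1; omega
    have : ‖ζ‖ ^ m - 2 ≤ ‖ζ‖ ^ (m - 1) := by
      refine le_of_mul_le_mul_right ?_ hSJ
      calc (‖ζ‖ ^ m - 2) * (‖ζ‖ ^ m) ^ J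
          ≤ ‖ζ‖ ^ k * ((‖ζ‖ ^ m - 1) * ‖∑ j ∈ range J, δ j * (ζ ^ m) ^ j‖) := by linarith
        _ ≤ ‖ζ‖ ^ (m - 1) * (‖ζ‖ ^ m) ^ J :=
          mul_le_mul hk' hB (mul_nonneg hS1 (norm_nonneg _)) (by positivity)
    nlinarith
  · have hB := sub_two_mul_pow_le_sub_one_mul_norm_sum_mul_pow hw hδ hδJ
    have hA := sub_one_mul_norm_sum_mul_pow_le hw hε (J + 1)
    rw [hnorm, hS] at hA
    rw [hS] at hB
    have hk' : ‖ζ‖ ≤ ‖ζ‖ ^ k := le_self_pow₀ hR.le (by omega)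
    refine le_of_mul_le_mul_right ?_ hSJ
    calc ‖ζ‖ * (‖ζ‖ ^ m - 2) * (‖ζ‖ ^ m) ^ J
        ≤ ‖ζ‖ * ((‖ζ‖ ^ m - 1) * ‖∑ j ∈ range (J + 1), δ j * (ζ ^ m) ^ j‖) := by
          rw [mul_assoc]; gcongr
      _ ≤ ‖ζ‖ ^ k * ((‖ζ‖ ^ m - 1) * ‖∑ j ∈ range (J + 1), δ j * (ζ ^ m) ^ j‖) :=
          mul_le_mul_of_nonneg_right hk' (mul_nonneg hS1 (norm_nonneg _))
      _ ≤ ‖ζ‖ ^ m * (‖ζ‖ ^ m) ^ J := by rw [← pow_succ']; linarith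

theorem norm_intCast_le_one_of_mem_Icc {n : ℤ} (hn : n ∈ Set.Icc (-1) 1) : ‖(n : 𝕜)‖ ≤ 1 := by
  obtain ⟨h₁, h₂⟩ := hn
  interval_cases n <;> simp

theorem norm_intCast_eq_one_of_mem_Icc {n : ℤ} (hn : n ∈ Set.Icc (-1) 1) (h₀ : n ≠ 0) :
    ‖(n : 𝕜)‖ = 1 := by
  obtain ⟨h₁, h₂⟩ := hn
  interval_cases n <;> simp_all

theorem sum_intCast_mul_pow_ne_mul_sum_intCast_mul_pow (hR : 1 < ‖ζ‖) (hk : 1 ≤ k)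
    (hkm : k < m) (hm : ‖ζ‖ ^ m < ‖ζ‖ * (‖ζ‖ ^ m - 2)) {ε δ : ℕ → ℤ}
    (hε : ∀ j, ε j ∈ Set.Icc (-1) 1) (hδ : ∀ j, δ j ∈ Set.Icc (-1) 1) (D : ℕ)
    (hD : ∃ j ≤ D, ε j ≠ 0 ∨ δ j ≠ 0) :
    ∑ j ∈ range (D + 1), (ε j : 𝕜) * (ζ ^ m) ^ j ≠
      ζ ^ k * ∑ j ∈ range (D + 1), (δ j : 𝕜) * (ζ ^ m) ^ j := by
  have htop (J : ℕ) (hJ : ε J ≠ 0 ∨ δ J ≠ 0) :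
      ∑ j ∈ range (J + 1), (ε j : 𝕜) * (ζ ^ m) ^ j ≠
        ζ ^ k * ∑ j ∈ range (J + 1), (δ j : 𝕜) * (ζ ^ m) ^ j := by
    refine sum_mul_pow_ne_mul_sum_mul_pow hR hk hkm hm
      (fun j => norm_intCast_le_one_of_mem_Icc (hε j))
      (fun j => norm_intCast_le_one_of_mem_Icc (hδ j)) ?_
    by_cases hδJ : δ J = 0
    · exact .inl ⟨(norm_intCast_eq_one_of_mem_Icc (hε J) (hJ.resolve_right (not_not.2 hδJ))).ge,
        by simp [hδJ]⟩
    · exact .inr (norm_intCast_eq_one_of_mem_Icc (hδ J) hδJ).ge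
  induction D with
  | zero =>
    obtain ⟨j, hj, hj₀⟩ := hD
    obtain rfl : j = 0 := by omega
    exact htop 0 hj₀
  | succ D ih =>
    by_cases hzero : ε (D + 1) = 0 ∧ δ (D + 1) = 0
    · have hD' : ∃ j ≤ D, ε j ≠ 0 ∨ δ j ≠ 0 := by
        obtain ⟨j, hj, hj₀⟩ := hD
        refine ⟨j, ?_, hj₀⟩
        rcases Nat.lt_or_eq_of_le hj with hj | rfl
        · omega
        · exact absurd hzero (by tauto)
      rw [sum_range_succ _ (D + 1), sum_range_succ (fun j => (δ j : 𝕜) * (ζ ^ m) ^ j) (D + 1),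
        hzero.1, hzero.2]
      simpa using ih hD'
    · exact htop (D + 1) (not_and_or.1 hzero)

end Divisibility

/-- If `f ∈ ℤ[z]` has a complex root `ζ` with `|ζ| > 1`, then for all sufficiently
large `m`, all `1 ≤ k < m`, and all tuples `ε, δ ∈ {−1,0,1}^{D+1}` not all zero,
the polynomial `Q(z) = Σ_{j=0}^D ε_j z^{mj} − Σ_{j=0}^D δ_j z^{mj+k}` is not
divisible by `f` in `ℂ[z]`. -/
theorem stmt7 (f : Polynomial ℤ) (ζ : ℂ)
    (hζ : (f.map (Int.castRingHom ℂ)).IsRoot ζ) (hR : 1 < ‖ζ‖) :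
    ∃ M : ℕ, ∀ m ≥ M, ∀ k, 1 ≤ k → k < m → ∀ D : ℕ, ∀ ε δ : ℕ → ℤ,
      (∀ j, ε j ∈ Set.Icc (-1 : ℤ) 1) → (∀ j, δ j ∈ Set.Icc (-1 : ℤ) 1) →
      (∃ j ≤ D, ε j ≠ 0 ∨ δ j ≠ 0) →
      ¬ (f.map (Int.castRingHom ℂ)) ∣
          (∑ j ∈ Finset.range (D + 1), C ((ε j : ℂ)) * X ^ (m * j)
            - ∑ j ∈ Finset.range (D + 1), C ((δ j : ℂ)) * X ^ (m * j + k)) := by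
  obtain ⟨M, hM⟩ := eventually_atTop.1 (eventually_pow_lt_mul_pow_sub_two hR)
  refine ⟨M, fun m hm k hk hkm D ε δ hε hδ hD hdvd => ?_⟩
  have hQ := eval_eq_zero_of_dvd_of_eval_eq_zero hdvd hζ
  simp only [eval_sub, eval_finsetSum, eval_mul, eval_C, eval_pow, eval_X, sub_eq_zero] at hQ
  refine sum_intCast_mul_pow_ne_mul_sum_intCast_mul_pow hR hk hkm (hM m hm) hε hδ D hD ?_
  simp only [← pow_mul, hQ, mul_sum]
  exact sum_congr rfl fun j _ => by ring
end
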